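/- arXiv:1909.00246 — 4 statements merged into one kernel-verified Lean document; each statement's English description precedes it below -/
import Mathlib

section
/- A connected k-uniform hypergraph H is r-regular for some r if and only if its signless Laplacian spectral radius equals k times its average degree, ρ(H) = k·d(H), where d(H) = (1/n)Σ_{v∈V} d(v). -/
open Matrix BigOperators Finset

variable {V : Type*} [Fintype V] [DecidableEq V]

/-- Incidence matrix of a hypergraph with vertex set `V` and edge set `E`. -/
def inc (E : Finset (Finset V)) : Matrix V {e // e ∈ E} ℝ :=
  fun v e => if v ∈ (e : Finset V) then 1 else 0

/-- Degree of a vertex: number of edges containing it. -/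
def deg (E : Finset (Finset V)) (v : V) : ℕ := (E.filter (fun e => v ∈ e)).card

/-- Signless Laplacian matrix `Q = B·Bᵀ`. -/
def Qmat (E : Finset (Finset V)) : Matrix V V ℝ := inc E * (inc E)ᵀ

/-- The signless Laplacian spectral radius: the largest eigenvalue. -/
noncomputable def specRad {n : Type*} [Fintype n] (M : Matrix n n ℝ) : ℝ :=
  sSup {μ : ℝ | ∃ x ≠ 0, M *ᵥ x = μ • x}

/-- Connectivity of a hypergraph: every two vertices are joined by a walk. -/
def Conn (E : Finset (Finset V)) : Prop :=
  ∀ u w : V, Relation.ReflTransGen (fun a b => a ≠ b ∧ ∃ e ∈ E, a ∈ e ∧ b ∈ e) u w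

lemma Qmat_apply (E : Finset (Finset V)) (v w : V) :
    Qmat E v w = ∑ e : {e // e ∈ E}, (if v ∈ (e : Finset V) then (1:ℝ) else 0) *
      (if w ∈ (e : Finset V) then (1:ℝ) else 0) := by
  simp [Qmat, Matrix.mul_apply, inc, Matrix.transpose_apply]

lemma Qmat_nonneg (E : Finset (Finset V)) (v w : V) : 0 ≤ Qmat E v w := by
  rw [Qmat_apply]
  exact Finset.sum_nonneg fun e _ => by positivity

lemma Qmat_isHermitian (E : Finset (Finset V)) : (Qmat E).IsHermitian := by
  show (Qmat E)ᴴ = Qmat E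
  ext v w
  simp only [Matrix.conjTranspose_apply, Qmat_apply, star_trivial]
  exact Finset.sum_congr rfl fun e _ => mul_comm _ _

lemma Qmat_rowsum (k : ℕ) (E : Finset (Finset V)) (hk : ∀ e ∈ E, e.card = k) (v : V) :
    ∑ w : V, Qmat E v w = (k : ℝ) * (deg E v : ℝ) := by
  simp only [Qmat_apply]
  rw [Finset.sum_comm]
  have : ∀ e : {e // e ∈ E}, ∑ w : V, (if v ∈ (e : Finset V) then (1:ℝ) else 0) *
      (if w ∈ (e : Finset V) then (1:ℝ) else 0) = if v ∈ (e : Finset V) then (k:ℝ) else 0 := by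
    intro e
    rw [← Finset.mul_sum]
    have : ∑ w : V, (if w ∈ (e : Finset V) then (1:ℝ) else 0) = (k : ℝ) := by
      rw [Finset.sum_ite_mem, Finset.univ_inter, Finset.sum_const, hk e e.2]
      simp
    rw [this]
    split <;> simp
  rw [Finset.sum_congr rfl (fun e _ => this e)]
  rw [Finset.sum_coe_sort E (fun e => if v ∈ e then (k:ℝ) else 0)]
  rw [Finset.sum_ite, Finset.sum_const, Finset.sum_const]
  simp [deg, mul_comm]

lemma Qmat_mulVec_ones (k : ℕ) (E : Finset (Finset V)) (hk : ∀ e ∈ E, e.card = k) :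
    Qmat E *ᵥ (fun _ => (1:ℝ)) = fun v => (k:ℝ) * (deg E v : ℝ) := by
  funext v
  simp only [Matrix.mulVec, dotProduct, mul_one]
  exact Qmat_rowsum k E hk v

/-- Eigenvalue bound by a bound on row sums, for entrywise nonnegative matrices. -/
lemma eig_le_rowsum {M : Matrix V V ℝ} (hM : ∀ v w, 0 ≤ M v w) (C : ℝ)
    (hC : ∀ v, ∑ w, M v w ≤ C) [Nonempty V] {μ : ℝ} {x : V → ℝ} (hx : x ≠ 0)
    (h : M *ᵥ x = μ • x) : μ ≤ C := by
  obtain ⟨v, -, hv⟩ := Finset.exists_max_image Finset.univ (fun v => |x v|)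
    ⟨Classical.arbitrary V, Finset.mem_univ _⟩
  have hvpos : 0 < |x v| := by
    obtain ⟨w, hw⟩ := Function.ne_iff.1 hx
    exact lt_of_lt_of_le (abs_pos.2 hw) (hv w (Finset.mem_univ w))
  have h1 : μ * x v = ∑ w, M v w * x w := by
    have := congrFun h v
    simp only [Matrix.mulVec, dotProduct, Pi.smul_apply, smul_eq_mul] at this
    exact this.symm
  have h2 : |μ| * |x v| ≤ C * |x v| := by
    calc |μ| * |x v| = |μ * x v| := (abs_mul μ (x v)).symm
      _ = |∑ w, M v w * x w| := by rw [h1]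
      _ ≤ ∑ w, |M v w * x w| := Finset.abs_sum_le_sum_abs _ _
      _ ≤ ∑ w, M v w * |x v| := by
          apply Finset.sum_le_sum
          intro w _
          rw [abs_mul, abs_of_nonneg (hM v w)]
          exact mul_le_mul_of_nonneg_left (hv w (Finset.mem_univ w)) (hM v w)
      _ = (∑ w, M v w) * |x v| := (Finset.sum_mul _ _ _).symm
      _ ≤ C * |x v| := mul_le_mul_of_nonneg_right (hC v) (abs_nonneg _)
  exact le_trans (le_abs_self μ) (le_of_mul_le_mul_right h2 hvpos)

theorem regular_iff_specRad_eq_k_mul_avg_degree (k : ℕ) (E : Finset (Finset V))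
    [Nonempty V] (hk : ∀ e ∈ E, e.card = k) (hconn : Conn E) :
    (∃ r : ℕ, ∀ v : V, deg E v = r) ↔
      specRad (Qmat E) =
        (k : ℝ) * ((∑ v : V, (deg E v : ℝ)) / (Fintype.card V : ℝ)) := by
  have hcard : (0:ℝ) < (Fintype.card V : ℝ) := by
    exact_mod_cast Fintype.card_pos
  have hones : (fun _ : V => (1:ℝ)) ≠ 0 := by
    intro h
    have := congrFun h (Classical.arbitrary V)
    simp at this
  -- uniform upper bound on eigenvalues
  have hub0 : ∀ μ ∈ {μ : ℝ | ∃ x ≠ 0, Qmat E *ᵥ x = μ • x},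
      μ ≤ (k:ℝ) * (E.card : ℝ) := by
    rintro μ ⟨x, hx, hmx⟩
    refine eig_le_rowsum (Qmat_nonneg E) _ (fun v => ?_) hx hmx
    rw [Qmat_rowsum k E hk v]
    have : (deg E v : ℝ) ≤ (E.card : ℝ) := by
      exact_mod_cast Finset.card_filter_le E _
    exact mul_le_mul_of_nonneg_left this (Nat.cast_nonneg k)
  have hBdd : BddAbove {μ : ℝ | ∃ x ≠ 0, Qmat E *ᵥ x = μ • x} := ⟨_, hub0⟩
  constructor
  · rintro ⟨r, hr⟩
    have havg : (∑ v : V, (deg E v : ℝ)) / (Fintype.card V : ℝ) = (r : ℝ) := by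
      have : (∑ v : V, (deg E v : ℝ)) = (Fintype.card V : ℝ) * r := by
        simp [hr, Finset.sum_const, mul_comm]
      rw [this, mul_comm, mul_div_assoc, div_self (ne_of_gt hcard), mul_one]
    rw [havg]
    have hker : ((k:ℝ) * (r:ℝ)) ∈ {μ : ℝ | ∃ x ≠ 0, Qmat E *ᵥ x = μ • x} := by
      refine ⟨fun _ => 1, hones, ?_⟩
      rw [Qmat_mulVec_ones k E hk]
      funext v
      simp [hr v]
    have hub : ∀ μ ∈ {μ : ℝ | ∃ x ≠ 0, Qmat E *ᵥ x = μ • x}, μ ≤ (k:ℝ) * (r:ℝ) := by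
      rintro μ ⟨x, hx, hmx⟩
      refine eig_le_rowsum (Qmat_nonneg E) _ (fun v => ?_) hx hmx
      rw [Qmat_rowsum k E hk v, hr v]
    exact le_antisymm (csSup_le ⟨_, hker⟩ hub) (le_csSup ⟨_, hub⟩ hker)
  · intro hρ
    by_cases hk0 : k = 0
    · refine ⟨0, fun v => ?_⟩
      simp only [deg, Finset.card_eq_zero, Finset.filter_eq_empty_iff]
      intro e he hve
      have := hk e he
      rw [hk0, Finset.card_eq_zero] at this
      simp [this] at hve
    -- main case k ≠ 0
    set ρ := specRad (Qmat E) with hρdef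
    have hherm := Qmat_isHermitian E
    set B := hherm.eigenvectorBasis with hB
    set lam := hherm.eigenvalues with hlam
    have heig : ∀ i, Qmat E *ᵥ ⇑(B i) = lam i • ⇑(B i) := fun i =>
      hherm.mulVec_eigenvectorBasis i
    have hBne : ∀ i, ⇑(B i) ≠ 0 := by
      intro i h
      exact B.orthonormal.ne_zero i (by ext v; exact congrFun h v)
    have hmem : ∀ i, lam i ∈ {μ : ℝ | ∃ x ≠ 0, Qmat E *ᵥ x = μ • x} :=
      fun i => ⟨⇑(B i), hBne i, heig i⟩
    have hle : ∀ i, lam i ≤ ρ := fun i => le_csSup hBdd (hmem i)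
    set o : EuclideanSpace ℝ V := WithLp.toLp 2 (fun _ => (1:ℝ)) with ho
    set c : V → ℝ := fun i => B.repr o i with hc
    -- pointwise expansion of o
    have hsum' : ∀ v, ∑ i, c i * B i v = 1 := by
      intro v
      have h := congrArg (EuclideanSpace.projₗ (𝕜 := ℝ) v) (B.sum_repr o)
      rw [map_sum] at h
      simpa [EuclideanSpace.projₗ, PiLp.projₗ, hc, ho] using h
    -- coefficients are column sums
    have hci : ∀ i, ∑ v, B i v = c i := by
      intro i
      rw [hc]
      simp only [B.repr_apply_apply]
      rw [show (inner ℝ (B i) o : ℝ) = ∑ v, B i v * o v from by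
        simp [PiLp.inner_apply, RCLike.inner_apply, conj_trivial, mul_comm]]
      simp [ho]
    have heig' : ∀ i v, ∑ w, Qmat E v w * B i w = lam i * B i v := by
      intro i v
      have := congrFun (heig i) v
      simpa [Matrix.mulVec, dotProduct] using this
    -- expansion of Q *ᵥ o
    have hQo : ∀ v, (Qmat E *ᵥ (fun _ => (1:ℝ))) v = ∑ i, c i * (lam i * B i v) := by
      intro v
      simp only [Matrix.mulVec, dotProduct]
      calc ∑ w, Qmat E v w * 1 = ∑ w, Qmat E v w * ∑ i, c i * B i w := by
            refine Finset.sum_congr rfl fun w _ => by rw [hsum' w]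
        _ = ∑ w, ∑ i, c i * (Qmat E v w * B i w) := by
            refine Finset.sum_congr rfl fun w _ => ?_
            rw [Finset.mul_sum]
            exact Finset.sum_congr rfl fun i _ => by ring
        _ = ∑ i, ∑ w, c i * (Qmat E v w * B i w) := Finset.sum_comm
        _ = ∑ i, c i * (lam i * B i v) := by
            refine Finset.sum_congr rfl fun i _ => ?_
            rw [← Finset.mul_sum, heig' i v]
    -- two evaluations of the quadratic form
    have hsum_deg : (k:ℝ) * (∑ v : V, (deg E v : ℝ)) = ρ * (Fintype.card V : ℝ) := by
      rw [hρ]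
      field_simp
    have hquad1 : ∑ v, (Qmat E *ᵥ (fun _ => (1:ℝ))) v = ρ * (Fintype.card V : ℝ) := by
      rw [Qmat_mulVec_ones k E hk, ← hsum_deg, Finset.mul_sum]
    have hquad2 : ∑ v, (Qmat E *ᵥ (fun _ => (1:ℝ))) v = ∑ i, lam i * (c i * c i) := by
      rw [Finset.sum_congr rfl fun v _ => hQo v, Finset.sum_comm]
      refine Finset.sum_congr rfl fun i _ => ?_
      calc ∑ v, c i * (lam i * B i v) = c i * lam i * ∑ v, B i v := by
            rw [Finset.mul_sum]
            exact Finset.sum_congr rfl fun v _ => by ring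
        _ = lam i * (c i * c i) := by rw [hci i]; ring
    have hnorm : ∑ i, c i * c i = (Fintype.card V : ℝ) := by
      have : ∑ v : V, (1:ℝ) = ∑ v, ∑ i, c i * B i v :=
        Finset.sum_congr rfl fun v _ => (hsum' v).symm
      rw [Finset.sum_comm] at this
      have h2 : ∑ i, ∑ v, c i * B i v = ∑ i, c i * c i := by
        refine Finset.sum_congr rfl fun i _ => ?_
        rw [← Finset.mul_sum, hci i]
      simp only [Finset.sum_const, Finset.card_univ, nsmul_eq_mul, mul_one] at this
      rw [← h2, ← this]
    -- equality forces each coefficient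
    have hkey : ∑ i, (ρ - lam i) * (c i * c i) = 0 := by
      have : ∑ i, (ρ - lam i) * (c i * c i)
          = ρ * (∑ i, c i * c i) - ∑ i, lam i * (c i * c i) := by
        rw [Finset.mul_sum, ← Finset.sum_sub_distrib]
        exact Finset.sum_congr rfl fun i _ => by ring
      rw [this, hnorm, ← hquad2, hquad1, sub_self]
    have hzero : ∀ i, (ρ - lam i) * (c i * c i) = 0 := by
      have := (Finset.sum_eq_zero_iff_of_nonneg (fun i _ =>
        mul_nonneg (sub_nonneg.2 (hle i)) (mul_self_nonneg (c i)))).1 hkey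
      exact fun i => this i (Finset.mem_univ i)
    have hcc : ∀ i, lam i * c i = ρ * c i := by
      intro i
      rcases mul_eq_zero.1 (hzero i) with h | h
      · rw [sub_eq_zero] at h; rw [← h]
      · have : c i = 0 := by nlinarith [mul_self_nonneg (c i)]
        rw [this, mul_zero, mul_zero]
    -- Q *ᵥ 1 = ρ • 1
    have hfinal : ∀ v, (k:ℝ) * (deg E v : ℝ) = ρ := by
      intro v
      have h1 : (Qmat E *ᵥ (fun _ => (1:ℝ))) v = ρ := by
        rw [hQo v]
        calc ∑ i, c i * (lam i * B i v) = ∑ i, ρ * (c i * B i v) := by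
              refine Finset.sum_congr rfl fun i _ => ?_
              calc c i * (lam i * B i v) = (lam i * c i) * B i v := by ring
                _ = (ρ * c i) * B i v := by rw [hcc i]
                _ = ρ * (c i * B i v) := by ring
        _ = ρ * ∑ i, c i * B i v := by rw [Finset.mul_sum]
        _ = ρ := by rw [hsum' v, mul_one]
      rw [← h1, Qmat_mulVec_ones k E hk]
    refine ⟨deg E (Classical.arbitrary V), fun v => ?_⟩
    have h1 := hfinal v
    have h2 := hfinal (Classical.arbitrary V)
    have : (k:ℝ) * (deg E v : ℝ) = (k:ℝ) * (deg E (Classical.arbitrary V) : ℝ) := by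
      rw [h1, h2]
    have hkne : (k:ℝ) ≠ 0 := Nat.cast_ne_zero.2 hk0
    have := mul_left_cancel₀ hkne this
    exact_mod_cast this
end

section
/- Let H be a k-uniform hypergraph that is balanced partially bipartite: there is a partition V = V_0 ∪ V_1 ∪ V_2 with V_1, V_2 nonempty and a constant c > 0 such that every edge e ⊄ V_0 satisfies |e∩V_1|/|e∩V_2| = c (in particular e∩V_2 ≠ ∅). Then 0 is an eigenvalue of the signless Laplacian Q(H). -/
open Matrix BigOperators Finset Polynomial

variable {V : Type*} [Fintype V] [DecidableEq V]

/-!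
Put weight `1` on `V₁` and `-c` on `V₂`. On an edge `e` the weights sum to
`|e ∩ V₁| - c |e ∩ V₂|`, which vanishes by balancedness if `e` meets `V₁ ∪ V₂` and trivially if
`e ⊆ V₀`. So the vector lies in the kernel of `Bᵀ`, hence in that of `Q = B Bᵀ`.
-/

theorem inc_transpose_mulVec_apply (E : Finset (Finset V)) (x : V → ℝ) (e : {e // e ∈ E}) :
    ((inc E)ᵀ *ᵥ x) e = ∑ v ∈ (e : Finset V), x v := by
  simp [Matrix.mulVec, dotProduct, inc, ite_mul, Finset.sum_ite_mem]

theorem Qmat_mulVec_eq_zero_of_forall_sum_eq_zero {E : Finset (Finset V)} {x : V → ℝ}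
    (hx : ∀ e ∈ E, ∑ v ∈ e, x v = 0) : Qmat E *ᵥ x = 0 := by
  have hBx : (inc E)ᵀ *ᵥ x = 0 := funext fun e => by
    rw [inc_transpose_mulVec_apply, Pi.zero_apply, hx e e.2]
  rw [Qmat, ← Matrix.mulVec_mulVec, hBx, Matrix.mulVec_zero]

section BalancedVector

omit [Fintype V]

def balancedVector (V₁ V₂ : Finset V) (c : ℝ) (v : V) : ℝ :=
  (if v ∈ V₁ then 1 else 0) - c * (if v ∈ V₂ then 1 else 0)

theorem sum_balancedVector (V₁ V₂ : Finset V) (c : ℝ) (e : Finset V) :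
    ∑ v ∈ e, balancedVector V₁ V₂ c v = ((e ∩ V₁).card : ℝ) - c * ((e ∩ V₂).card : ℝ) := by
  simp [balancedVector, Finset.sum_sub_distrib, mul_comm]

theorem balancedVector_of_mem_left {V₁ V₂ : Finset V} (h12 : Disjoint V₁ V₂) (c : ℝ) {v : V}
    (hv : v ∈ V₁) : balancedVector V₁ V₂ c v = 1 := by
  simp [balancedVector, hv, Finset.disjoint_left.mp h12 hv]

end BalancedVector

theorem balanced_partially_bipartite_zero_eigenvalue_general (E : Finset (Finset V))
    (V₀ V₁ V₂ : Finset V)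
    (h01 : Disjoint V₀ V₁) (h02 : Disjoint V₀ V₂) (h12 : Disjoint V₁ V₂)
    (hV₁ : V₁.Nonempty)
    (c : ℝ)
    (hbal : ∀ e ∈ E, ¬ e ⊆ V₀ →
      (e ∩ V₂).Nonempty ∧ ((e ∩ V₁).card : ℝ) = c * ((e ∩ V₂).card : ℝ)) :
    ∃ x : V → ℝ, x ≠ 0 ∧ Qmat E *ᵥ x = 0 := by
  refine ⟨balancedVector V₁ V₂ c, ?_, Qmat_mulVec_eq_zero_of_forall_sum_eq_zero fun e he => ?_⟩
  · obtain ⟨v, hv⟩ := hV₁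
    intro h
    simpa [balancedVector_of_mem_left h12 c hv] using congrFun h v
  · rw [sum_balancedVector]
    by_cases h0 : e ⊆ V₀
    · rw [disjoint_iff_inter_eq_empty.mp (disjoint_of_subset_left h0 h01),
        disjoint_iff_inter_eq_empty.mp (disjoint_of_subset_left h0 h02)]
      simp
    · rw [(hbal e he h0).2, sub_self]

theorem balanced_partially_bipartite_zero_eigenvalue (k : ℕ) (E : Finset (Finset V))
    (hk : ∀ e ∈ E, e.card = k)
    (V₀ V₁ V₂ : Finset V)
    (hcover : ∀ v : V, v ∈ V₀ ∨ v ∈ V₁ ∨ v ∈ V₂)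
    (h01 : Disjoint V₀ V₁) (h02 : Disjoint V₀ V₂) (h12 : Disjoint V₁ V₂)
    (hV₁ : V₁.Nonempty) (hV₂ : V₂.Nonempty)
    (c : ℝ) (hc : 0 < c)
    (hbal : ∀ e ∈ E, ¬ e ⊆ V₀ →
      (e ∩ V₂).Nonempty ∧ ((e ∩ V₁).card : ℝ) = c * ((e ∩ V₂).card : ℝ)) :
    ∃ x : V → ℝ, x ≠ 0 ∧ Qmat E *ᵥ x = 0 :=
  balanced_partially_bipartite_zero_eigenvalue_general E V₀ V₁ V₂ h01 h02 h12 hV₁ c hbal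
end

section
/- Let H be a connected k-uniform hypergraph with signless Laplacian spectral radius ρ(Q). Then min_{e∈E} Σ_{v∈e} d(v) ≤ ρ(Q) ≤ max_{e∈E} Σ_{v∈e} d(v). -/
open Matrix BigOperators Finset

variable {V : Type*} [Fintype V] [DecidableEq V]

lemma exists_big_eigenvalue {ι : Type*} [Fintype ι] [DecidableEq ι] [Nonempty ι]
    (M : Matrix ι ι ℝ) (hM : M.IsHermitian) (c : ℝ)
    (hc : c * (Fintype.card ι) ≤ ∑ e, ∑ f, M e f) :
    ∃ μ : ℝ, c ≤ μ ∧ ∃ y : ι → ℝ, y ≠ 0 ∧ M *ᵥ y = μ • y := by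
  classical
  set T : EuclideanSpace ℝ ι →ₗ[ℝ] EuclideanSpace ℝ ι := Matrix.toEuclideanLin M with hT
  have hsymm : T.IsSymmetric := (Matrix.isHermitian_iff_isSymmetric).mp hM
  haveI : Nontrivial (EuclideanSpace ℝ ι) := by
    refine ⟨0, (WithLp.equiv 2 (ι → ℝ)).symm (fun _ => 1), fun h => ?_⟩
    have := congrArg (WithLp.equiv 2 (ι → ℝ)) h
    simp at this
    exact one_ne_zero (congrFun this (Classical.arbitrary ι)).symm
  have heig := hsymm.hasEigenvalue_iSup_of_finiteDimensional
  set μ : ℝ := (⨆ x : { x : EuclideanSpace ℝ ι // x ≠ 0 },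
      RCLike.re (inner ℝ (T x) (x : EuclideanSpace ℝ ι) : ℝ) / ‖(x : EuclideanSpace ℝ ι)‖ ^ 2) with hμ
  obtain ⟨y, hy⟩ := heig.exists_hasEigenvector
  have hcle : c ≤ μ := by
    -- Rayleigh quotient at the all-ones vector
    have hcard : (0:ℝ) < Fintype.card ι := by positivity
    set x₀ : EuclideanSpace ℝ ι := (WithLp.equiv 2 (ι → ℝ)).symm (fun _ => 1) with hx₀
    have hx₀ne : x₀ ≠ 0 := by
      intro h
      have := congrArg (WithLp.equiv 2 (ι → ℝ)) h
      rw [Equiv.apply_symm_apply] at this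
      exact one_ne_zero (congrFun this (Classical.arbitrary ι))
    -- inner (T x₀) x₀ = ∑ e, ∑ f, M e f
    have hinner : (inner ℝ (T x₀) x₀ : ℝ) = ∑ e, ∑ f, M e f := by
      rw [hT, Matrix.toEuclideanLin_apply]
      simp only [PiLp.inner_apply, RCLike.inner_apply, starRingEnd_apply, star_trivial]
      simp [hx₀, Matrix.mulVec, dotProduct]
    have hnorm : ‖x₀‖ ^ 2 = (Fintype.card ι : ℝ) := by
      rw [EuclideanSpace.norm_eq, Real.sq_sqrt (by positivity)]
      simp [hx₀]
    -- boundedness of the Rayleigh quotient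
    set T' := LinearMap.toContinuousLinearMap T with hT'
    have hbdd : BddAbove (Set.range fun x : { x : EuclideanSpace ℝ ι // x ≠ 0 } =>
        RCLike.re (inner ℝ (T x) (x : EuclideanSpace ℝ ι) : ℝ) / ‖(x : EuclideanSpace ℝ ι)‖ ^ 2) := by
      refine ⟨‖T'‖, ?_⟩
      rintro _ ⟨x, rfl⟩
      have hxpos : (0:ℝ) < ‖(x : EuclideanSpace ℝ ι)‖ := norm_pos_iff.mpr x.2
      rw [div_le_iff₀ (by positivity)]
      have h1 : (inner ℝ (T x) (x : EuclideanSpace ℝ ι) : ℝ) ≤ ‖T (x : EuclideanSpace ℝ ι)‖ * ‖(x : EuclideanSpace ℝ ι)‖ :=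
        real_inner_le_norm _ _
      have h2 : ‖T (x : EuclideanSpace ℝ ι)‖ ≤ ‖T'‖ * ‖(x : EuclideanSpace ℝ ι)‖ :=
        T'.le_opNorm _
      simp only [RCLike.re_to_real]
      calc (inner ℝ (T x) (x : EuclideanSpace ℝ ι) : ℝ)
          ≤ ‖T (x : EuclideanSpace ℝ ι)‖ * ‖(x : EuclideanSpace ℝ ι)‖ := h1
        _ ≤ (‖T'‖ * ‖(x : EuclideanSpace ℝ ι)‖) * ‖(x : EuclideanSpace ℝ ι)‖ := by
            exact mul_le_mul_of_nonneg_right h2 (le_of_lt hxpos)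
        _ = ‖T'‖ * ‖(x : EuclideanSpace ℝ ι)‖ ^ 2 := by ring
    have hle := le_ciSup hbdd (⟨x₀, hx₀ne⟩ : { x : EuclideanSpace ℝ ι // x ≠ 0 })
    refine le_trans ?_ hle
    simp only [RCLike.re_to_real, hinner, hnorm]
    rw [le_div_iff₀ hcard]
    exact hc
  refine ⟨μ, hcle, (WithLp.equiv 2 (ι → ℝ)) y, ?_, ?_⟩
  · intro h
    apply hy.2
    have := congrArg (WithLp.equiv 2 (ι → ℝ)).symm h
    simpa using this
  · have := hy.apply_eq_smul
    have h2 := congrArg (WithLp.equiv 2 (ι → ℝ)) this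
    rw [hT, Matrix.toEuclideanLin_apply] at h2
    simpa using h2

-- row sums of the edge matrix
lemma row_sum_eq (E : Finset (Finset V)) (e : {e // e ∈ E}) :
    ∑ f : {e // e ∈ E}, ((inc E)ᵀ * inc E) e f = ∑ v ∈ (e : Finset V), (deg E v : ℝ) := by
  simp only [Matrix.mul_apply, Matrix.transpose_apply]
  rw [Finset.sum_comm]
  have : ∀ v : V, ∑ f : {e // e ∈ E}, inc E v e * inc E v f
      = (if v ∈ (e : Finset V) then (deg E v : ℝ) else 0) := by
    intro v
    rw [← Finset.mul_sum]
    have : ∑ f : {e // e ∈ E}, inc E v f = (deg E v : ℝ) := by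
      simp only [inc]
      rw [Finset.sum_coe_sort E (fun f => if v ∈ f then (1:ℝ) else 0)]
      simp [deg]
    rw [this, inc]
    split <;> simp
  rw [Finset.sum_congr rfl (fun v _ => this v)]
  rw [Finset.sum_ite_mem, Finset.univ_inter]

lemma edge_mat_nonneg (E : Finset (Finset V)) (e f : {e // e ∈ E}) :
    0 ≤ ((inc E)ᵀ * inc E) e f := by
  simp only [Matrix.mul_apply, Matrix.transpose_apply]
  apply Finset.sum_nonneg
  intro v _
  unfold inc
  split <;> split <;> norm_num

-- any eigenvalue of Qmat is at most the max row sum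
lemma eig_le_sup (E : Finset (Finset V)) (hE : E.Nonempty) (μ : ℝ)
    (hμ : ∃ x ≠ 0, Qmat E *ᵥ x = μ • x) :
    μ ≤ E.sup' hE (fun e => ∑ v ∈ e, (deg E v : ℝ)) := by
  classical
  obtain ⟨x, hx0, hx⟩ := hμ
  have hsupnn : 0 ≤ E.sup' hE (fun e => ∑ v ∈ e, (deg E v : ℝ)) := by
    obtain ⟨e₀, he₀⟩ := hE
    refine le_trans ?_ (Finset.le_sup' _ he₀)
    positivity
  by_cases hzero : μ = 0
  · rw [hzero]; exact hsupnn
  · set B := inc E with hB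
    set y := Bᵀ *ᵥ x with hy
    have hMy : (Bᵀ * B) *ᵥ y = μ • y := by
      rw [hy, Matrix.mulVec_mulVec, Matrix.mul_assoc, ← Matrix.mulVec_mulVec,
        ← Matrix.mulVec_mulVec]
      rw [show B *ᵥ (Bᵀ *ᵥ x) = (B * Bᵀ) *ᵥ x from (Matrix.mulVec_mulVec _ _ _)]
      rw [show B * Bᵀ = Qmat E from rfl, hx, Matrix.mulVec_smul]
    have hy0 : y ≠ 0 := by
      intro h
      have : B *ᵥ y = 0 := by rw [h, Matrix.mulVec_zero]
      rw [hy, Matrix.mulVec_mulVec, show B * Bᵀ = Qmat E from rfl, hx] at this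
      exact smul_ne_zero hzero hx0 this
    -- pick the coordinate with max |y|
    haveI : Nonempty {e // e ∈ E} := ⟨⟨hE.choose, hE.choose_spec⟩⟩
    obtain ⟨e₁, _, he₁⟩ := Finset.exists_max_image Finset.univ (fun f => |y f|)
      Finset.univ_nonempty
    have hy₁pos : 0 < |y e₁| := by
      rcases Function.ne_iff.mp hy0 with ⟨f, hf⟩
      exact lt_of_lt_of_le (abs_pos.mpr hf) (he₁ f (Finset.mem_univ f))
    have key : |μ| * |y e₁| ≤ (∑ v ∈ (e₁ : Finset V), (deg E v : ℝ)) * |y e₁| := by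
      have h1 : |μ| * |y e₁| = |((Bᵀ * B) *ᵥ y) e₁| := by
        rw [hMy]; simp [abs_mul]
      rw [h1]
      calc |((Bᵀ * B) *ᵥ y) e₁| = |∑ f, (Bᵀ * B) e₁ f * y f| := by rfl
        _ ≤ ∑ f, |(Bᵀ * B) e₁ f * y f| := Finset.abs_sum_le_sum_abs _ _
        _ ≤ ∑ f, (Bᵀ * B) e₁ f * |y e₁| := by
            apply Finset.sum_le_sum
            intro f _
            rw [abs_mul, abs_of_nonneg (edge_mat_nonneg E e₁ f)]
            exact mul_le_mul_of_nonneg_left (he₁ f (Finset.mem_univ f))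
              (edge_mat_nonneg E e₁ f)
        _ = (∑ v ∈ (e₁ : Finset V), (deg E v : ℝ)) * |y e₁| := by
            rw [← Finset.sum_mul, row_sum_eq]
    have habs : |μ| ≤ ∑ v ∈ (e₁ : Finset V), (deg E v : ℝ) :=
      le_of_mul_le_mul_right (by linarith [key]) hy₁pos
    exact le_trans (le_trans (le_abs_self μ) habs)
      (Finset.le_sup' (fun e => ∑ v ∈ e, (deg E v : ℝ)) e₁.2)

theorem specRad_degree_bounds (k : ℕ) (E : Finset (Finset V))
    (hk : ∀ e ∈ E, e.card = k) (hconn : Conn E) (hE : E.Nonempty) :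
    E.inf' hE (fun e => ∑ v ∈ e, (deg E v : ℝ)) ≤ specRad (Qmat E) ∧
      specRad (Qmat E) ≤ E.sup' hE (fun e => ∑ v ∈ e, (deg E v : ℝ)) := by
  classical
  constructor
  · -- lower bound
    rcases Nat.eq_zero_or_pos k with hk0 | hkpos
    · -- k = 0 : every edge and hence every sum is empty
      have hinf : E.inf' hE (fun e => ∑ v ∈ e, (deg E v : ℝ)) = 0 := by
        obtain ⟨e₀, he₀⟩ := hE
        have he : e₀ = ∅ := Finset.card_eq_zero.mp (hk0 ▸ hk e₀ he₀)
        apply le_antisymm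
        · refine le_trans (Finset.inf'_le _ he₀) ?_
          rw [he]; simp
        · apply Finset.le_inf'
          intro e _
          positivity
      rw [hinf]
      apply Real.sSup_nonneg
      rintro μ ⟨x, hx0, hx⟩
      have hQ : Qmat E = 0 := by
        ext v w
        unfold Qmat
        rw [Matrix.mul_apply]
        unfold inc
        apply Finset.sum_eq_zero
        intro e _
        have : (e : Finset V) = ∅ := Finset.card_eq_zero.mp (hk0 ▸ hk e e.2)
        simp [this]
      rw [hQ] at hx
      simp only [Matrix.zero_mulVec] at hx
      rcases Function.ne_iff.mp hx0 with ⟨v, hv⟩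
      have := congrFun hx.symm v
      simp only [Pi.smul_apply, Pi.zero_apply, smul_eq_mul] at this
      rcases mul_eq_zero.mp this with h | h
      · rw [h]
      · exact absurd h hv
    · -- k ≥ 1
      haveI : Nonempty {e // e ∈ E} := ⟨⟨hE.choose, hE.choose_spec⟩⟩
      set c := E.inf' hE (fun e => ∑ v ∈ e, (deg E v : ℝ)) with hc
      have hck : (k : ℝ) ≤ c := by
        apply Finset.le_inf'
        intro e he
        calc (k : ℝ) = ∑ v ∈ e, (1 : ℝ) := by rw [Finset.sum_const, hk e he]; simp
          _ ≤ ∑ v ∈ e, (deg E v : ℝ) := by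
              apply Finset.sum_le_sum
              intro v hv
              have : 0 < deg E v := Finset.card_pos.mpr ⟨e, Finset.mem_filter.mpr ⟨he, hv⟩⟩
              exact_mod_cast this
      have hcpos : 0 < c := lt_of_lt_of_le (by exact_mod_cast hkpos) hck
      have hherm : ((inc E)ᵀ * inc E).IsHermitian := by
        have := Matrix.isHermitian_conjTranspose_mul_self (inc E)
        rwa [Matrix.conjTranspose_eq_transpose_of_trivial] at this
      have hsum : c * (Fintype.card {e // e ∈ E}) ≤ ∑ e, ∑ f, ((inc E)ᵀ * inc E) e f := by
        calc c * (Fintype.card {e // e ∈ E})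
            = ∑ _e : {e // e ∈ E}, c := by rw [Finset.sum_const]; simp [mul_comm]
          _ ≤ ∑ e : {e // e ∈ E}, ∑ f, ((inc E)ᵀ * inc E) e f := by
              apply Finset.sum_le_sum
              intro e _
              rw [row_sum_eq]
              exact Finset.inf'_le _ e.2
      obtain ⟨μ, hcμ, y, hy0, hMy⟩ := exists_big_eigenvalue _ hherm c hsum
      have hμpos : 0 < μ := lt_of_lt_of_le hcpos hcμ
      -- transfer eigenvalue to Qmat
      set x := inc E *ᵥ y with hxdef
      have hQx : Qmat E *ᵥ x = μ • x := by
        rw [hxdef, Matrix.mulVec_mulVec, show Qmat E * inc E = inc E * ((inc E)ᵀ * inc E) by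
          rw [Qmat, Matrix.mul_assoc], ← Matrix.mulVec_mulVec, hMy, Matrix.mulVec_smul]
      have hx0 : x ≠ 0 := by
        intro h
        have : (inc E)ᵀ *ᵥ x = 0 := by rw [h, Matrix.mulVec_zero]
        rw [hxdef, Matrix.mulVec_mulVec, hMy] at this
        exact smul_ne_zero (ne_of_gt hμpos) hy0 this
      have hmem : μ ∈ {μ : ℝ | ∃ x ≠ 0, Qmat E *ᵥ x = μ • x} := ⟨x, hx0, hQx⟩
      have hbdd : BddAbove {μ : ℝ | ∃ x ≠ 0, Qmat E *ᵥ x = μ • x} :=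
        ⟨E.sup' hE (fun e => ∑ v ∈ e, (deg E v : ℝ)), fun μ' hμ' => eig_le_sup E hE μ' hμ'⟩
      exact le_trans hcμ (le_csSup hbdd hmem)
  · -- upper bound
    apply Real.sSup_le
    · intro μ hμ
      exact eig_le_sup E hE μ hμ
    · obtain ⟨e₀, he₀⟩ := hE
      refine le_trans ?_ (Finset.le_sup' _ he₀)
      positivity
end

section
/- Let H be a connected k-uniform hypergraph. Then the chromatic number satisfies χ(H) ≤ (1/k)·ρ(H) + 1, where ρ(H) is the signless Laplacian spectral radius. -/
open Matrix BigOperators Finset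

variable {V : Type*} [Fintype V] [DecidableEq V]

/-- The chromatic number: least `r` admitting a proper `r`-coloring (no
monochromatic edge). -/
noncomputable def chromNum (E : Finset (Finset V)) : ℕ :=
  sInf {r : ℕ | ∃ f : V → Fin r, ∀ e ∈ E, ∃ u ∈ e, ∃ w ∈ e, f u ≠ f w}

section spec
variable {n : Type*} [Fintype n] [DecidableEq n] {Q : Matrix n n ℝ}

lemma eig_mem_range (hQ : Q.IsHermitian) {μ : ℝ} (h : ∃ x ≠ 0, Q *ᵥ x = μ • x) :
    ∃ i, hQ.eigenvalues i = μ := by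
  obtain ⟨x, hx0, hx⟩ := h
  set U : Matrix n n ℝ := (hQ.eigenvectorUnitary : Matrix n n ℝ) with hU
  have hUU : U * star U = 1 := (Matrix.mem_unitaryGroup_iff).mp hQ.eigenvectorUnitary.2
  have hD : star U * Q * U = Matrix.diagonal (RCLike.ofReal ∘ hQ.eigenvalues) :=
    by have := hQ.conjStarAlgAut_star_eigenvectorUnitary; rwa [Unitary.conjStarAlgAut_star_apply] at this
  set y : n → ℝ := (star U) *ᵥ x with hy
  have hxy : U *ᵥ y = x := by
    rw [hy, mulVec_mulVec, hUU, one_mulVec]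
  have hy0 : y ≠ 0 := by
    intro h0
    apply hx0
    rw [← hxy, h0, mulVec_zero]
  have hDy : Matrix.diagonal (RCLike.ofReal ∘ hQ.eigenvalues) *ᵥ y = μ • y := by
    rw [← hD, ← mulVec_mulVec, ← mulVec_mulVec, hxy, hx, mulVec_smul]
  obtain ⟨i, hi⟩ := Function.ne_iff.mp hy0
  refine ⟨i, ?_⟩
  have h2 := congrFun hDy i
  have hne : y i ≠ 0 := by simpa using hi
  simp only [Matrix.mulVec_diagonal, Pi.smul_apply, smul_eq_mul, Function.comp_apply,
    RCLike.ofReal_real_eq_id, id_eq] at h2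
  exact mul_right_cancel₀ hne h2

lemma bddAbove_eigset (hQ : Q.IsHermitian) :
    BddAbove {μ : ℝ | ∃ x ≠ 0, Q *ᵥ x = μ • x} := by
  have hsub : {μ : ℝ | ∃ x ≠ 0, Q *ᵥ x = μ • x} ⊆ Set.range hQ.eigenvalues := by
    intro μ hμ
    obtain ⟨i, hi⟩ := eig_mem_range hQ hμ
    exact ⟨i, hi⟩
  exact (Set.finite_range _).bddAbove.mono hsub

lemma eigenvalue_mem (hQ : Q.IsHermitian) (i : n) :
    hQ.eigenvalues i ∈ {μ : ℝ | ∃ x ≠ 0, Q *ᵥ x = μ • x} := by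
  refine ⟨⇑(hQ.eigenvectorBasis i), ?_, hQ.mulVec_eigenvectorBasis i⟩
  have h0 := hQ.eigenvectorBasis.orthonormal.ne_zero i
  intro h
  apply h0
  ext j
  exact congrFun h j

lemma eigenvalue_le_specRad (hQ : Q.IsHermitian) (i : n) : hQ.eigenvalues i ≤ specRad Q :=
  le_csSup (bddAbove_eigset hQ) (eigenvalue_mem hQ i)

lemma rayleigh_le_specRad (hQ : Q.IsHermitian) (x : n → ℝ) :
    x ⬝ᵥ (Q *ᵥ x) ≤ specRad Q * (x ⬝ᵥ x) := by
  set U : Matrix n n ℝ := (hQ.eigenvectorUnitary : Matrix n n ℝ) with hU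
  have hUU : U * star U = 1 := (Matrix.mem_unitaryGroup_iff).mp hQ.eigenvectorUnitary.2
  set y : n → ℝ := (star U) *ᵥ x with hy
  have hyvm : y = x ᵥ* U := by
    rw [hy]
    ext i
    simp [Matrix.mulVec, Matrix.vecMul, dotProduct, Matrix.star_apply, mul_comm]
  have hQx : x ⬝ᵥ (Q *ᵥ x) = ∑ i, hQ.eigenvalues i * (y i * y i) := by
    conv_lhs => rw [hQ.spectral_theorem, Unitary.conjStarAlgAut_apply]
    rw [← mulVec_mulVec, ← mulVec_mulVec, dotProduct_mulVec, ← hyvm]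
    simp only [dotProduct, Matrix.mulVec_diagonal, Function.comp_apply,
      RCLike.ofReal_real_eq_id, id_eq]
    apply Finset.sum_congr rfl
    intro i _
    ring
  have hxx : x ⬝ᵥ x = ∑ i, y i * y i := by
    have h : y ⬝ᵥ y = x ⬝ᵥ x := by
      calc y ⬝ᵥ y = (x ᵥ* U) ⬝ᵥ (star U *ᵥ x) := by rw [← hyvm, ← hy]
        _ = ((x ᵥ* U) ᵥ* star U) ⬝ᵥ x := dotProduct_mulVec _ _ _
        _ = (x ᵥ* (U * star U)) ⬝ᵥ x := by rw [vecMul_vecMul]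
        _ = x ⬝ᵥ x := by rw [hUU, vecMul_one]
    rw [← h]
    rfl
  rw [hQx, hxx, Finset.mul_sum]
  apply Finset.sum_le_sum
  intro i _
  exact mul_le_mul_of_nonneg_right (eigenvalue_le_specRad hQ i) (mul_self_nonneg _)
end spec

lemma qform_eq (E : Finset (Finset V)) (x : V → ℝ) :
    x ⬝ᵥ (Qmat E *ᵥ x) = ((inc E)ᵀ *ᵥ x) ⬝ᵥ ((inc E)ᵀ *ᵥ x) := by
  rw [Qmat, ← mulVec_mulVec, dotProduct_mulVec, mulVec_transpose]

lemma qform_nonneg (E : Finset (Finset V)) (x : V → ℝ) :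
    0 ≤ x ⬝ᵥ (Qmat E *ᵥ x) := by
  rw [qform_eq]
  exact Finset.sum_nonneg fun i _ => mul_self_nonneg _

lemma specRad_nonneg (E : Finset (Finset V)) : 0 ≤ specRad (Qmat E) := by
  by_cases hV : Nonempty V
  · obtain ⟨v⟩ := hV
    have h := rayleigh_le_specRad (Qmat_isHermitian E) (Pi.single v 1 : V → ℝ)
    have h0 := qform_nonneg E (Pi.single v 1 : V → ℝ)
    have h1 : (Pi.single v 1 : V → ℝ) ⬝ᵥ (Pi.single v 1 : V → ℝ) = 1 := by
      simp [dotProduct, Pi.single_apply]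
    rw [h1, mul_one] at h
    linarith
  · have hempty : {μ : ℝ | ∃ x ≠ 0, Qmat E *ᵥ x = μ • x} = ∅ := by
      ext μ
      simp only [Set.mem_setOf_eq, Set.mem_empty_iff_false, iff_false, not_exists]
      rintro x ⟨hx0, -⟩
      exact hx0 (funext fun v => absurd ⟨v⟩ hV)
    rw [specRad, hempty, Real.sSup_empty]

theorem chromatic_number_bound (k : ℕ) (E : Finset (Finset V))
    (hk : ∀ e ∈ E, e.card = k) (hconn : Conn E) :
    (chromNum E : ℝ) ≤ (1 / (k : ℝ)) * specRad (Qmat E) + 1 := by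
  classical
  have hρ0 : 0 ≤ specRad (Qmat E) := specRad_nonneg E
  set c := chromNum E with hc
  by_cases hc1 : c ≤ 1
  · have : (c : ℝ) ≤ 1 := by exact_mod_cast hc1
    have hnn : 0 ≤ (1 / (k : ℝ)) * specRad (Qmat E) := by positivity
    linarith
  push_neg at hc1
  -- c ≥ 2
  have hEne : E.Nonempty := by
    rcases E.eq_empty_or_nonempty with h | h
    · exfalso
      have h1 : c ≤ 1 := Nat.sInf_le ⟨fun _ => (0 : Fin 1), by simp [h]⟩
      omega
    · exact h
  have hk2 : 2 ≤ k := by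
    by_contra hklt
    push_neg at hklt
    obtain ⟨e₀, he₀⟩ := hEne
    have hcard : e₀.card ≤ 1 := by
      have := hk e₀ he₀
      omega
    have hempty : {r : ℕ | ∃ f : V → Fin r, ∀ e ∈ E, ∃ u ∈ e, ∃ w ∈ e, f u ≠ f w} = ∅ := by
      ext r
      simp only [Set.mem_setOf_eq, Set.mem_empty_iff_false, iff_false, not_exists]
      intro f hf
      obtain ⟨u, hu, w, hw, hne⟩ := hf e₀ he₀
      exact hne (by rw [Finset.card_le_one.mp hcard u hu w hw])
    have : c = 0 := by rw [hc, chromNum, hempty, Nat.sInf_empty]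
    omega
  set r := c - 1 with hr
  have hr1 : 1 ≤ r := by omega
  have hrc : r + 1 = c := by omega
  have hnr : ¬∃ f : V → Fin r, ∀ e ∈ E, ∃ u ∈ e, ∃ w ∈ e, f u ≠ f w := by
    rintro ⟨f, hf⟩
    have : c ≤ r := Nat.sInf_le ⟨f, hf⟩
    omega
  -- minimal non-(r)-colorable subset S
  set P : Finset V → Prop :=
    fun S => ¬∃ f : V → Fin r, ∀ e ∈ E, e ⊆ S → ∃ u ∈ e, ∃ w ∈ e, f u ≠ f w with hP
  have hPuniv : P Finset.univ := by
    rintro ⟨f, hf⟩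
    exact hnr ⟨f, fun e he => hf e he (Finset.subset_univ e)⟩
  have Hex : ∃ m, ∃ S : Finset V, S.card = m ∧ P S := ⟨_, Finset.univ, rfl, hPuniv⟩
  obtain ⟨S, hScard, hPS⟩ := Nat.find_spec Hex
  have hmin : ∀ T : Finset V, P T → Nat.find Hex ≤ T.card :=
    fun T hT => Nat.find_le ⟨T, rfl, hT⟩
  -- S is nonempty
  have hSne : S.Nonempty := by
    rcases S.eq_empty_or_nonempty with h | h
    · exfalso
      apply hPS
      refine ⟨fun _ => ⟨0, by omega⟩, fun e he hsub => ?_⟩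
      exfalso
      have he0 : e = ∅ := Finset.subset_empty.mp (h ▸ hsub)
      have h0 : e.card = k := hk e he
      rw [he0] at h0
      simp at h0
      omega
    · exact h
  -- minimum degree bound within S
  have hdeg : ∀ v ∈ S, r ≤ (E.filter (fun e => v ∈ e ∧ e ⊆ S)).card := by
    intro v hv
    by_contra hlt
    push_neg at hlt
    have hTcard : (S.erase v).card < S.card := Finset.card_erase_lt_of_mem hv
    have hPT : ¬P (S.erase v) := by
      intro hT
      have := hmin _ hT
      omega
    obtain ⟨f, hf⟩ : ∃ f : V → Fin r, ∀ e ∈ E, e ⊆ S.erase v →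
        ∃ u ∈ e, ∃ w ∈ e, f u ≠ f w := not_not.mp hPT
    -- pick a vertex of e other than v
    have hpick : ∀ e ∈ E, v ∈ e → ∃ u, u ∈ e.erase v := by
      intro e he hve
      have h1 : 1 ≤ (e.erase v).card := by
        rw [Finset.card_erase_of_mem hve, hk e he]
        omega
      exact Finset.card_pos.mp (by omega)
    classical
    set pick : Finset V → V := fun e =>
      if h : ∃ u, u ∈ e.erase v then h.choose else v with hpickdef
    have hpickmem : ∀ e ∈ E, v ∈ e → pick e ∈ e.erase v := by
      intro e he hve
      have h := hpick e he hve
      simp only [hpickdef, dif_pos h]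
      exact h.choose_spec
    set F : Finset (Fin r) :=
      (E.filter (fun e => v ∈ e ∧ e ⊆ S)).image (fun e => f (pick e)) with hF
    have hFcard : F.card < r := lt_of_le_of_lt (Finset.card_image_le) hlt
    obtain ⟨a, ha⟩ : ∃ a : Fin r, a ∉ F := by
      by_contra hall
      push_neg at hall
      have : F = Finset.univ := Finset.eq_univ_iff_forall.mpr hall
      have := Finset.card_univ (α := Fin r) ▸ this ▸ hFcard
      simp at this
    set g : V → Fin r := Function.update f v a with hg
    apply hPS
    refine ⟨g, fun e he hsub => ?_⟩
    by_cases hve : v ∈ e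
    · have hpm := hpickmem e he hve
      have hpe : pick e ∈ e := Finset.mem_of_mem_erase hpm
      have hpv : pick e ≠ v := Finset.ne_of_mem_erase hpm
      refine ⟨v, hve, pick e, hpe, ?_⟩
      have h1 : g v = a := Function.update_self v a f
      have h2 : g (pick e) = f (pick e) := Function.update_of_ne hpv a f
      rw [h1, h2]
      intro hEq
      apply ha
      rw [hF]
      exact Finset.mem_image.mpr ⟨e, Finset.mem_filter.mpr ⟨he, hve, hsub⟩, hEq.symm⟩
    · have hsub' : e ⊆ S.erase v := fun u hu =>
        Finset.mem_erase.mpr ⟨fun h => hve (h ▸ hu), hsub hu⟩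
      obtain ⟨u, hu, w, hw, hne⟩ := hf e he hsub'
      refine ⟨u, hu, w, hw, ?_⟩
      have hu_ne : u ≠ v := fun h => hve (by rw [← h]; exact hu)
      have hw_ne : w ≠ v := fun h => hve (by rw [← h]; exact hw)
      have h1 : g u = f u := Function.update_of_ne hu_ne a f
      have h2 : g w = f w := Function.update_of_ne hw_ne a f
      rw [h1, h2]
      exact hne
  -- double counting
  set ES : Finset (Finset V) := E.filter (fun e => e ⊆ S) with hES
  have hcount : r * S.card ≤ k * ES.card := by
    calc r * S.card = ∑ _v ∈ S, r := by rw [Finset.sum_const, smul_eq_mul, mul_comm]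
    _ ≤ ∑ v ∈ S, (E.filter (fun e => v ∈ e ∧ e ⊆ S)).card :=
        Finset.sum_le_sum hdeg
    _ = ∑ v ∈ S, ∑ e ∈ E, (if v ∈ e ∧ e ⊆ S then 1 else 0) := by
        refine Finset.sum_congr rfl fun v _ => ?_
        rw [Finset.card_filter]
    _ = ∑ e ∈ E, ∑ v ∈ S, (if v ∈ e ∧ e ⊆ S then 1 else 0) := Finset.sum_comm
    _ = ∑ e ∈ ES, e.card := by
        rw [hES, Finset.sum_filter]
        refine Finset.sum_congr rfl fun e he => ?_
        by_cases hsub : e ⊆ S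
        · rw [if_pos hsub]
          have hstep : ∑ v ∈ S, (if v ∈ e ∧ e ⊆ S then 1 else 0)
              = ∑ v ∈ S, (if v ∈ e then 1 else 0) :=
            Finset.sum_congr rfl fun v _ => by simp [hsub]
          rw [hstep, ← Finset.card_filter]
          congr 1
          ext u
          simp only [Finset.mem_filter]
          exact ⟨fun h => h.2, fun h => ⟨hsub h, h⟩⟩
        · simp [hsub]
    _ = ∑ _e ∈ ES, k := Finset.sum_congr rfl fun e he =>
        hk e (Finset.mem_filter.mp he).1
    _ = k * ES.card := by rw [Finset.sum_const, smul_eq_mul, mul_comm]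
  -- Rayleigh quotient with the indicator vector of S
  set x : V → ℝ := fun v => if v ∈ S then 1 else 0 with hx
  have hxx : x ⬝ᵥ x = (S.card : ℝ) := by
    have hstep : ∀ v, x v * x v = if v ∈ S then (1:ℝ) else 0 := fun v => by
      by_cases h : v ∈ S <;> simp [hx, h]
    simp only [dotProduct, hstep]
    rw [Finset.sum_ite_mem, Finset.univ_inter, Finset.sum_const, nsmul_eq_mul, mul_one]
  have hBx : ∀ e : {e // e ∈ E}, ((inc E)ᵀ *ᵥ x) e = (((e : Finset V) ∩ S).card : ℝ) := by
    intro e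
    simp only [Matrix.mulVec, Matrix.transpose_apply, dotProduct, inc, hx]
    have hstep : ∀ v, (if v ∈ (e:Finset V) then (1:ℝ) else 0) * (if v ∈ S then 1 else 0)
        = if v ∈ (e:Finset V) ∩ S then 1 else 0 := fun v => by
      by_cases h1 : v ∈ (e:Finset V) <;> by_cases h2 : v ∈ S <;> simp [h1, h2]
    simp only [hstep]
    rw [Finset.sum_ite_mem, Finset.univ_inter, Finset.sum_const, nsmul_eq_mul, mul_one]
  have hq : x ⬝ᵥ (Qmat E *ᵥ x) = ∑ e ∈ E, ((e ∩ S).card : ℝ)^2 := by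
    rw [qform_eq]
    simp only [dotProduct]
    calc ∑ e : {e // e ∈ E}, ((inc E)ᵀ *ᵥ x) e * ((inc E)ᵀ *ᵥ x) e
        = ∑ e : {e // e ∈ E}, (((e : Finset V) ∩ S).card : ℝ)^2 := by
          refine Finset.sum_congr rfl fun e _ => ?_
          rw [hBx e]; ring
      _ = ∑ e ∈ E, ((e ∩ S).card : ℝ)^2 :=
          Finset.sum_coe_sort E (fun e => ((e ∩ S).card : ℝ)^2)
  have hlow : (ES.card : ℝ) * (k:ℝ)^2 ≤ x ⬝ᵥ (Qmat E *ᵥ x) := by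
    rw [hq]
    have h1 : ∀ e ∈ ES, ((e ∩ S).card : ℝ)^2 = (k:ℝ)^2 := by
      intro e he
      obtain ⟨heE, hesub⟩ := Finset.mem_filter.mp he
      rw [Finset.inter_eq_left.mpr hesub, hk e heE]
    calc (ES.card : ℝ) * (k:ℝ)^2 = ∑ _e ∈ ES, (k:ℝ)^2 := by
          rw [Finset.sum_const, nsmul_eq_mul]
      _ = ∑ e ∈ ES, ((e ∩ S).card : ℝ)^2 := (Finset.sum_congr rfl h1).symm
      _ ≤ ∑ e ∈ E, ((e ∩ S).card : ℝ)^2 :=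
          Finset.sum_le_sum_of_subset_of_nonneg (Finset.filter_subset _ _)
            (fun e _ _ => sq_nonneg _)
  have hray := rayleigh_le_specRad (Qmat_isHermitian E) x
  rw [hxx] at hray
  have key : (ES.card : ℝ) * (k:ℝ)^2 ≤ specRad (Qmat E) * S.card := le_trans hlow hray
  have hcountR : (r:ℝ) * S.card ≤ (k:ℝ) * ES.card := by exact_mod_cast hcount
  have hS0 : 0 < (S.card : ℝ) := by exact_mod_cast Finset.card_pos.mpr hSne
  have hk0 : 0 < (k : ℝ) := by
    have : (2:ℝ) ≤ (k:ℝ) := by exact_mod_cast hk2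
    linarith
  have hkr : (k:ℝ) * (r:ℝ) ≤ specRad (Qmat E) := by
    nlinarith [mul_le_mul_of_nonneg_left hcountR hk0.le, key, hS0]
  have hdiv : (r:ℝ) ≤ (1/(k:ℝ)) * specRad (Qmat E) := by
    rw [one_div_mul_eq_div, le_div_iff₀ hk0]
    linarith [hkr]
  have hcr : (c:ℝ) = (r:ℝ) + 1 := by exact_mod_cast hrc.symm
  rw [hcr]
  linarith
end
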